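/- For every p ∈ [1,∞) there exists a constant c_p > 0 such that for all finite connected nonempty graphs A and B, the L^p-Poincaré constant of the product graph A × B satisfies h^p(A × B) ≥ c_p · min(h^p(A), h^p(B)). -/

import Mathlib

/-!
Split `f - 𝔼 f = (f - M) + (M - 𝔼 f)`, where `M (a, b)` is the mean of `f` over the `B`-fibre
through `a`. On each `B`-fibre the Poincaré inequality of `B` bounds `‖f - M‖_p` by the gradient
of `f` along the fibre, which is at most the gradient in `A □ B`. The fibre mean `M` is a function
on `A` whose gradient is at most the fibre average of `∇f`, so by Jensen `‖∇_A M‖_p^p` is at most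
`‖∇f‖_p^p / |B|`, and the Poincaré inequality of `A` bounds `‖M - 𝔼 f‖_p`. Minkowski's inequality
then gives the theorem with `c_p = 1/2`.
-/

/-- The max-gradient of `f` at `x`: `sup` of `|f x - f y|` over neighbours `y`. -/
noncomputable def grad {V : Type*} (Adj : V → V → Prop) (f : V → ℝ) (x : V) : ℝ :=
  ⨆ y, ⨆ (_ : Adj x y), |f x - f y|

/-- The `Lᵖ` norm of `g : V → ℝ` (counting measure). -/
noncomputable def pnorm {V : Type*} [Fintype V] (p : ℝ) (g : V → ℝ) : ℝ :=
  (∑ x, |g x| ^ p) ^ (1 / p)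

/-- The `Lᵖ`-Poincaré constant of a finite graph: the infimum of
`‖∇f‖_p / ‖f - f_Γ‖_p` over nonconstant `f`, where `f_Γ` is the mean of `f`. -/
noncomputable def poincareConst {V : Type*} [Fintype V] (p : ℝ) (G : SimpleGraph V) : ℝ :=
  sInf { r | ∃ f : V → ℝ, (∃ x y, f x ≠ f y) ∧
    r = pnorm p (grad G.Adj f) / pnorm p (fun x => f x - (∑ w, f w) / (Fintype.card V : ℝ)) }

open Finset
open scoped BigOperators

variable {V : Type*}

lemma grad_nonneg (Adj : V → V → Prop) (f : V → ℝ) (x : V) : 0 ≤ grad Adj f x :=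
  Real.iSup_nonneg fun _ => Real.iSup_nonneg fun _ => abs_nonneg _

lemma grad_le {Adj : V → V → Prop} {f : V → ℝ} {x : V} {K : ℝ} (hK : 0 ≤ K)
    (h : ∀ y, Adj x y → |f x - f y| ≤ K) : grad Adj f x ≤ K :=
  Real.iSup_le (fun y => Real.iSup_le (h y) hK) hK

lemma le_grad [Finite V] {Adj : V → V → Prop} {f : V → ℝ} {x y : V} (h : Adj x y) :
    |f x - f y| ≤ grad Adj f x :=
  (le_ciSup (f := fun _ : Adj x y => |f x - f y|) (Set.finite_range _).bddAbove h).trans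
    (le_ciSup (f := fun y => ⨆ _ : Adj x y, |f x - f y|) (Set.finite_range _).bddAbove y)

lemma rpow_expect_le_expect_rpow {ι : Type*} [Fintype ι] [Nonempty ι] {g : ι → ℝ}
    (hg : ∀ i, 0 ≤ g i) {p : ℝ} (hp : 1 ≤ p) : (𝔼 i, g i) ^ p ≤ 𝔼 i, g i ^ p := by
  simp only [Fintype.expect_eq_sum_div_card, div_eq_inv_mul, mul_sum]
  exact Real.rpow_arith_mean_le_arith_mean_rpow _ (fun _ => (Fintype.card ι : ℝ)⁻¹) _
    (fun _ _ => by positivity) (by simp) (fun i _ => hg i) hp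

section LpNorm

variable [Fintype V] {p : ℝ}

lemma pnorm_nonneg (p : ℝ) (g : V → ℝ) : 0 ≤ pnorm p g :=
  Real.rpow_nonneg (sum_nonneg fun _ _ => Real.rpow_nonneg (abs_nonneg _) _) _

lemma pnorm_rpow (hp : 0 < p) (g : V → ℝ) : pnorm p g ^ p = ∑ x, |g x| ^ p := by
  rw [pnorm, ← Real.rpow_mul (sum_nonneg fun _ _ => Real.rpow_nonneg (abs_nonneg _) _),
    one_div_mul_cancel hp.ne', Real.rpow_one]

lemma pnorm_zero (hp : 0 < p) : pnorm p (0 : V → ℝ) = 0 := by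
  simp [pnorm, Real.zero_rpow hp.ne', hp.ne']

lemma pnorm_pos {g : V → ℝ} (x : V) (hx : g x ≠ 0) : 0 < pnorm p g :=
  Real.rpow_pos_of_pos (sum_pos' (fun _ _ => Real.rpow_nonneg (abs_nonneg _) _)
    ⟨x, mem_univ x, Real.rpow_pos_of_pos (abs_pos.2 hx) p⟩) _

lemma pnorm_add_le (hp : 1 ≤ p) (g h : V → ℝ) : pnorm p (g + h) ≤ pnorm p g + pnorm p h :=
  Real.Lp_add_le univ g h hp

lemma mul_pnorm_le_pnorm_iff (hp : 0 < p) {c : ℝ} (hc : 0 ≤ c) (g h : V → ℝ) :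
    c * pnorm p g ≤ pnorm p h ↔ c ^ p * ∑ x, |g x| ^ p ≤ ∑ x, |h x| ^ p := by
  rw [← Real.rpow_le_rpow_iff (mul_nonneg hc (pnorm_nonneg p g)) (pnorm_nonneg p h) hp,
    Real.mul_rpow hc (pnorm_nonneg p g), pnorm_rpow hp, pnorm_rpow hp]

lemma pnorm_sub_expect_pos {g : V → ℝ} (hg : ∃ x y, g x ≠ g y) :
    0 < pnorm p (fun x => g x - 𝔼 w, g w) := by
  obtain ⟨x, y, hxy⟩ := hg
  have : g x - 𝔼 w, g w ≠ 0 ∨ g y - 𝔼 w, g w ≠ 0 := by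
    by_contra! h
    exact hxy (by linarith [h.1, h.2])
  rcases this with h | h
  exacts [pnorm_pos x h, pnorm_pos y h]

end LpNorm

section Poincare

variable [Fintype V] {p : ℝ}

lemma poincareConst_nonneg (p : ℝ) (G : SimpleGraph V) : 0 ≤ poincareConst p G :=
  Real.sInf_nonneg <| by
    rintro r ⟨f, -, rfl⟩
    exact div_nonneg (pnorm_nonneg _ _) (pnorm_nonneg _ _)

lemma poincareConst_eq_zero_of_subsingleton [Subsingleton V] (p : ℝ) (G : SimpleGraph V) :
    poincareConst p G = 0 := by
  refine (congrArg sInf (Set.eq_empty_of_forall_notMem ?_)).trans Real.sInf_empty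
  rintro r ⟨f, ⟨x, y, hxy⟩, -⟩
  exact hxy (congrArg f (Subsingleton.elim x y))

lemma poincareConst_le (G : SimpleGraph V) {g : V → ℝ} (hg : ∃ x y, g x ≠ g y) :
    poincareConst p G ≤ pnorm p (grad G.Adj g) / pnorm p (fun x => g x - 𝔼 w, g w) := by
  refine csInf_le ⟨0, ?_⟩ ⟨g, hg, by simp_rw [Fintype.expect_eq_sum_div_card]⟩
  rintro r ⟨f, -, rfl⟩
  exact div_nonneg (pnorm_nonneg _ _) (pnorm_nonneg _ _)

lemma le_poincareConst [Nontrivial V] (G : SimpleGraph V) {c : ℝ}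
    (h : ∀ g : V → ℝ, c * pnorm p (fun x => g x - 𝔼 w, g w) ≤ pnorm p (grad G.Adj g)) :
    c ≤ poincareConst p G := by
  classical
  obtain ⟨x, y, hxy⟩ := exists_pair_ne V
  refine le_csInf ⟨_, fun z => if z = x then 1 else 0, ⟨x, y, by simp [hxy.symm]⟩, rfl⟩ ?_
  rintro r ⟨g, hg, rfl⟩
  simp_rw [← Fintype.expect_eq_sum_div_card]
  exact (le_div_iff₀ (pnorm_sub_expect_pos hg)).2 (h g)

theorem poincareConst_mul_pnorm_le (hp : 0 < p) (G : SimpleGraph V) (g : V → ℝ) :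
    poincareConst p G * pnorm p (fun x => g x - 𝔼 w, g w) ≤ pnorm p (grad G.Adj g) := by
  by_cases hg : ∃ x y, g x ≠ g y
  · exact (le_div_iff₀ (pnorm_sub_expect_pos hg)).1 (poincareConst_le G hg)
  · push Not at hg
    have hdev : (fun x => g x - 𝔼 w, g w) = 0 := funext fun x => by
      have : Nonempty V := ⟨x⟩
      rw [expect_congr rfl fun w _ => hg w x, Fintype.expect_const, sub_self, Pi.zero_apply]
    rw [hdev, pnorm_zero hp, mul_zero]
    exact pnorm_nonneg _ _

end Poincare

section BoxProd

variable {VA VB : Type*} [Fintype VA] [Fintype VB] {p : ℝ}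

lemma grad_fiber_le (A : SimpleGraph VA) (B : SimpleGraph VB) (f : VA × VB → ℝ) (a : VA)
    (b : VB) : grad B.Adj (fun b => f (a, b)) b ≤ grad (A □ B).Adj f (a, b) :=
  grad_le (grad_nonneg _ _ _) fun _ hb => le_grad (Or.inr ⟨hb, rfl⟩)

lemma grad_fiberMean_le (A : SimpleGraph VA) (B : SimpleGraph VB) (f : VA × VB → ℝ) (a : VA) :
    grad A.Adj (fun a => 𝔼 b, f (a, b)) a ≤ 𝔼 b, grad (A □ B).Adj f (a, b) := by
  refine grad_le (expect_nonneg fun b _ => grad_nonneg _ _ _) fun a' ha => ?_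
  calc |𝔼 b, f (a, b) - 𝔼 b, f (a', b)| = |𝔼 b, (f (a, b) - f (a', b))| := by
        rw [expect_sub_distrib]
    _ ≤ 𝔼 b, |f (a, b) - f (a', b)| := abs_expect_le _ _
    _ ≤ 𝔼 b, grad (A □ B).Adj f (a, b) :=
        expect_le_expect fun b _ => le_grad (Or.inl ⟨ha, rfl⟩)

lemma poincareConst_mul_pnorm_sub_fiberMean_le (hp : 0 < p) (A : SimpleGraph VA)
    (B : SimpleGraph VB) (f : VA × VB → ℝ) :
    poincareConst p B * pnorm p (fun x => f x - 𝔼 b, f (x.1, b))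
      ≤ pnorm p (grad (A □ B).Adj f) := by
  have hB := poincareConst_nonneg p B
  rw [mul_pnorm_le_pnorm_iff hp hB, Fintype.sum_prod_type, Fintype.sum_prod_type, mul_sum]
  refine sum_le_sum fun a _ => ?_
  have hfiber := poincareConst_mul_pnorm_le hp B fun b => f (a, b)
  rw [mul_pnorm_le_pnorm_iff hp hB] at hfiber
  refine hfiber.trans (sum_le_sum fun b _ => ?_)
  rw [abs_of_nonneg (grad_nonneg _ _ _), abs_of_nonneg (grad_nonneg _ _ _)]
  exact Real.rpow_le_rpow (grad_nonneg _ _ _) (grad_fiber_le A B f a b) hp.le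

lemma poincareConst_mul_pnorm_fiberMean_sub_expect_le [Nonempty VB] (hp : 1 ≤ p)
    (A : SimpleGraph VA) (B : SimpleGraph VB) (f : VA × VB → ℝ) :
    poincareConst p A * pnorm p (fun x : VA × VB => 𝔼 b, f (x.1, b) - 𝔼 y, f y)
      ≤ pnorm p (grad (A □ B).Adj f) := by
  have hp0 : 0 < p := by linarith
  have hA := poincareConst_nonneg p A
  set M : VA → ℝ := fun a => 𝔼 b, f (a, b)
  set G := grad (A □ B).Adj f
  have hG (x : VA × VB) : 0 ≤ G x := grad_nonneg _ _ _
  have hMean : 𝔼 a, M a = 𝔼 y, f y := by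
    rw [← Finset.expect_product', univ_product_univ]
  have hPoincareA := poincareConst_mul_pnorm_le hp0 A M
  rw [hMean, mul_pnorm_le_pnorm_iff hp0 hA] at hPoincareA
  have hgradM (a : VA) : |grad A.Adj M a| ^ p ≤ 𝔼 b, |G (a, b)| ^ p := by
    simp_rw [abs_of_nonneg (grad_nonneg _ _ _), abs_of_nonneg (hG _)]
    calc grad A.Adj M a ^ p ≤ (𝔼 b, G (a, b)) ^ p :=
          Real.rpow_le_rpow (grad_nonneg _ _ _) (grad_fiberMean_le A B f a) hp0.le
      _ ≤ 𝔼 b, G (a, b) ^ p := rpow_expect_le_expect_rpow (fun _ => hG _) hp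
  rw [mul_pnorm_le_pnorm_iff hp0 hA]
  calc poincareConst p A ^ p * ∑ x : VA × VB, |M x.1 - 𝔼 y, f y| ^ p
      = Fintype.card VB * (poincareConst p A ^ p * ∑ a, |M a - 𝔼 y, f y| ^ p) := by
        simp only [Fintype.sum_prod_type, sum_const, card_univ, nsmul_eq_mul, mul_sum]
        exact sum_congr rfl fun a _ => by ring
    _ ≤ Fintype.card VB * ∑ a, 𝔼 b, |G (a, b)| ^ p := by
        gcongr
        exact hPoincareA.trans (sum_le_sum fun a _ => hgradM a)
    _ = ∑ x, |G x| ^ p := by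
        simp only [mul_sum, Fintype.card_mul_expect, Fintype.sum_prod_type]

theorem min_poincareConst_mul_pnorm_le [Nonempty VB] (hp : 1 ≤ p) (A : SimpleGraph VA)
    (B : SimpleGraph VB) (f : VA × VB → ℝ) :
    min (poincareConst p A) (poincareConst p B) * pnorm p (fun x => f x - 𝔼 y, f y)
      ≤ 2 * pnorm p (grad (A □ B).Adj f) := by
  set m := min (poincareConst p A) (poincareConst p B)
  have hm : 0 ≤ m := le_min (poincareConst_nonneg p A) (poincareConst_nonneg p B)
  set M : VA × VB → ℝ := fun x => 𝔼 b, f (x.1, b)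
  have hsplit : (fun x => f x - 𝔼 y, f y) = (fun x => f x - M x) + fun x => M x - 𝔼 y, f y := by
    ext x
    simp
  calc m * pnorm p (fun x => f x - 𝔼 y, f y)
      ≤ m * pnorm p (fun x => f x - M x) + m * pnorm p (fun x => M x - 𝔼 y, f y) := by
        rw [hsplit, ← mul_add]
        exact mul_le_mul_of_nonneg_left (pnorm_add_le hp _ _) hm
    _ ≤ poincareConst p B * pnorm p (fun x => f x - M x)
          + poincareConst p A * pnorm p (fun x => M x - 𝔼 y, f y) := by
        gcongr
        exacts [pnorm_nonneg _ _, min_le_right _ _, pnorm_nonneg _ _, min_le_left _ _]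
    _ ≤ pnorm p (grad (A □ B).Adj f) + pnorm p (grad (A □ B).Adj f) :=
        add_le_add (poincareConst_mul_pnorm_sub_fiberMean_le (by linarith) A B f)
          (poincareConst_mul_pnorm_fiberMean_sub_expect_le hp A B f)
    _ = 2 * pnorm p (grad (A □ B).Adj f) := (two_mul _).symm

end BoxProd

/-- For every `p ∈ [1,∞)` there is a constant `c_p > 0` such that for all finite
connected nonempty graphs `A`, `B`: `h^p(A × B) ≥ c_p · min (h^p A) (h^p B)`,
where `A × B` is the Cartesian (box) product graph. -/
theorem stmt5 (p : ℝ) (hp : 1 ≤ p) :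
    ∃ c : ℝ, 0 < c ∧
      ∀ (VA VB : Type) [Fintype VA] [Fintype VB] [Nonempty VA] [Nonempty VB]
        (A : SimpleGraph VA) (B : SimpleGraph VB),
        A.Connected → B.Connected →
        c * min (poincareConst p A) (poincareConst p B)
          ≤ poincareConst p (A.boxProd B) := by
  refine ⟨1 / 2, one_half_pos, fun VA VB _ _ _ _ A B _ _ => ?_⟩
  have hAB := poincareConst_nonneg p (A □ B)
  rcases subsingleton_or_nontrivial (VA × VB) with _ | _
  · have : Subsingleton VA := (Prod.fst_surjective (β := VB)).subsingleton
    have hmin := (min_le_left _ (poincareConst p B)).trans (poincareConst_eq_zero_of_subsingleton p A).le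
    linarith
  · refine le_poincareConst (A □ B) fun f => ?_
    linarith [min_poincareConst_mul_pnorm_le hp A B f]
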